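/- arXiv:1208.1430 — 2 statements merged into one kernel-verified Lean document; each statement's English description precedes it below -/
import Mathlib

section
/- Let F be an asymmetric norm on ℝ² with anisotropy ratio κ(F), and let u, v ∈ ℤ² satisfy |det(u,v)| = 1 and ⟨u,v⟩ ≥ √(κ(F)² − 1). Then u and v form an F-acute angle. -/
open scoped RealInnerProductSpace
open MeasureTheory Real

noncomputable section

abbrev E2 : Type := EuclideanSpace ℝ (Fin 2)

def mk2 (a b : ℝ) : E2 := WithLp.toLp 2 ![a, b]

def IsAsymNorm (F : E2 → ℝ) : Prop :=
  ConvexOn ℝ Set.univ F ∧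
  (∀ (c : ℝ), 0 ≤ c → ∀ u : E2, F (c • u) = c * F u) ∧
  (∀ u : E2, 0 ≤ F u) ∧
  (∀ u : E2, u ≠ 0 → 0 < F u)

def IsAcute (F : E2 → ℝ) (u v : E2) : Prop :=
  ∀ δ : ℝ, 0 ≤ δ → F u ≤ F (u + δ • v) ∧ F v ≤ F (v + δ • u)

noncomputable def kappa (F : E2 → ℝ) : ℝ :=
  sSup {r : ℝ | ∃ u v : E2, ‖u‖ = 1 ∧ ‖v‖ = 1 ∧ r = F u / F v}

def det2 (u v : E2) : ℝ := u 0 * v 1 - u 1 * v 0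

def IsIntVec (u : E2) : Prop := (∃ n : ℤ, u 0 = (n : ℝ)) ∧ (∃ n : ℤ, u 1 = (n : ℝ))

def eTheta (θ : ℝ) : E2 := mk2 (Real.cos θ) (Real.sin θ)

noncomputable def phiF (F : E2 → ℝ) (θ : ℝ) : ℝ :=
  Real.arctan (det2 (eTheta θ) (gradient F (eTheta θ)) / F (eTheta θ))

def rot2 (θ : ℝ) (w : E2) : E2 :=
  mk2 (Real.cos θ * w 0 - Real.sin θ * w 1) (Real.sin θ * w 0 + Real.cos θ * w 1)

def perp (z : E2) : E2 := mk2 (-(z 1)) (z 0)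

/-! By Hahn–Banach, `F` has a supporting functional `⟪p, ·⟫ ≤ F` at `u` with `⟪p, u⟫ = F u`, and then
`F (u + δ v) ≥ F u + δ ⟪p, v⟫`, so it suffices that `⟪p, v⟫ ≥ 0`. Comparing `F` with the Euclidean
norm through `κ` gives `‖u‖ ‖p‖ ≤ κ ⟪u, p⟫`, i.e. `p` lies in the cone
`|det(u, p)| ≤ √(κ² - 1) ⟪u, p⟫` around `u`, while the hypotheses put `v` in the cone
`√(κ² - 1) |det(u, v)| ≤ ⟪u, v⟫`. The planar identity
`‖u‖² ⟪p, v⟫ = ⟪u, p⟫ ⟪u, v⟫ + det(u, p) det(u, v)` then forces `⟪p, v⟫ ≥ 0`. -/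

lemma E2.inner_eq (u v : E2) : ⟪u, v⟫ = u 0 * v 0 + u 1 * v 1 := by
  simp only [PiLp.inner_apply, Fin.sum_univ_two, RCLike.inner_apply, conj_trivial]
  ring

lemma E2.norm_sq_eq (u : E2) : ‖u‖ ^ 2 = u 0 ^ 2 + u 1 ^ 2 := by
  rw [← real_inner_self_eq_norm_sq, E2.inner_eq]
  ring

lemma det2_anticomm (u v : E2) : det2 v u = -det2 u v := by
  unfold det2
  ring

lemma inner_sq_add_det2_sq (u p : E2) : ⟪u, p⟫ ^ 2 + det2 u p ^ 2 = ‖u‖ ^ 2 * ‖p‖ ^ 2 := by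
  rw [E2.inner_eq, E2.norm_sq_eq, E2.norm_sq_eq, det2]
  ring

lemma norm_sq_mul_inner_eq (u p v : E2) :
    ‖u‖ ^ 2 * ⟪p, v⟫ = ⟪u, p⟫ * ⟪u, v⟫ + det2 u p * det2 u v := by
  rw [E2.inner_eq, E2.inner_eq, E2.inner_eq, E2.norm_sq_eq, det2, det2]
  ring

lemma abs_det2_le_of_norm_mul_norm_le {u p : E2} {κ : ℝ} (hκ : 1 ≤ κ)
    (h : ‖u‖ * ‖p‖ ≤ κ * ⟪u, p⟫) : |det2 u p| ≤ √(κ ^ 2 - 1) * ⟪u, p⟫ := by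
  have hup : 0 ≤ ⟪u, p⟫ :=
    nonneg_of_mul_nonneg_right ((by positivity : (0 : ℝ) ≤ ‖u‖ * ‖p‖).trans h) (by linarith)
  have hsq : det2 u p ^ 2 ≤ (κ ^ 2 - 1) * ⟪u, p⟫ ^ 2 := by
    have := inner_sq_add_det2_sq u p
    nlinarith [mul_self_le_mul_self (by positivity) h]
  calc |det2 u p| = √(det2 u p ^ 2) := (Real.sqrt_sq_eq_abs _).symm
    _ ≤ √((κ ^ 2 - 1) * ⟪u, p⟫ ^ 2) := Real.sqrt_le_sqrt hsq
    _ = √(κ ^ 2 - 1) * ⟪u, p⟫ := by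
      rw [Real.sqrt_mul' _ (sq_nonneg _), Real.sqrt_sq hup]

lemma inner_nonneg_of_abs_det2_le {u p v : E2} {c : ℝ} (hu : u ≠ 0) (hup : 0 ≤ ⟪u, p⟫)
    (hp : |det2 u p| ≤ c * ⟪u, p⟫) (hv : c * |det2 u v| ≤ ⟪u, v⟫) : 0 ≤ ⟪p, v⟫ := by
  have hu2 : 0 < ‖u‖ ^ 2 := by positivity
  have key : 0 ≤ ‖u‖ ^ 2 * ⟪p, v⟫ := by
    rw [norm_sq_mul_inner_eq]
    calc 0 ≤ ⟪u, p⟫ * (⟪u, v⟫ - c * |det2 u v|) := mul_nonneg hup (sub_nonneg.2 hv)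
      _ = ⟪u, p⟫ * ⟪u, v⟫ - c * ⟪u, p⟫ * |det2 u v| := by ring
      _ ≤ ⟪u, p⟫ * ⟪u, v⟫ - |det2 u p| * |det2 u v| := by gcongr
      _ ≤ ⟪u, p⟫ * ⟪u, v⟫ + det2 u p * det2 u v := by
        rw [← abs_mul]
        linarith [neg_abs_le (det2 u p * det2 u v)]
  exact nonneg_of_mul_nonneg_right (by linarith) hu2

namespace IsAsymNorm

variable {F : E2 → ℝ}

lemma map_zero (hF : IsAsymNorm F) : F 0 = 0 := by
  simpa using hF.2.1 0 le_rfl 0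

lemma map_add_le (hF : IsAsymNorm F) (x y : E2) : F (x + y) ≤ F x + F y := by
  have hmid := hF.1.2 (Set.mem_univ x) (Set.mem_univ y) (by norm_num : (0 : ℝ) ≤ 1 / 2)
    (by norm_num : (0 : ℝ) ≤ 1 / 2) (by norm_num)
  have hsum : x + y = (2 : ℝ) • ((1 / 2 : ℝ) • x + (1 / 2 : ℝ) • y) := by
    rw [smul_add, smul_smul, smul_smul]
    norm_num
  rw [hsum, hF.2.1 2 zero_le_two]
  simp only [smul_eq_mul] at hmid
  linarith

lemma map_div_norm (hF : IsAsymNorm F) (x : E2) : F (‖x‖⁻¹ • x) = F x / ‖x‖ := by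
  rw [hF.2.1 _ (by positivity), inv_mul_eq_div]

lemma bddAbove_ratios (hF : IsAsymNorm F) :
    BddAbove {r : ℝ | ∃ u v : E2, ‖u‖ = 1 ∧ ‖v‖ = 1 ∧ r = F u / F v} := by
  have hS : IsCompact (Metric.sphere (0 : E2) 1) := isCompact_sphere 0 1
  have hcont : ContinuousOn F (Metric.sphere (0 : E2) 1) :=
    (hF.1.continuousOn isOpen_univ).mono (Set.subset_univ _)
  obtain ⟨b, hb, hbmin⟩ :=
    hS.exists_isMinOn (NormedSpace.sphere_nonempty.2 zero_le_one) hcont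
  obtain ⟨M, hM⟩ := hS.bddAbove_image hcont
  have hb0 : 0 < F b := hF.2.2.2 b (ne_zero_of_mem_unit_sphere ⟨b, hb⟩)
  refine ⟨M / F b, ?_⟩
  rintro r ⟨u, v, hu, hv, rfl⟩
  have hu' : u ∈ Metric.sphere (0 : E2) 1 := mem_sphere_zero_iff_norm.2 hu
  have hv' : v ∈ Metric.sphere (0 : E2) 1 := mem_sphere_zero_iff_norm.2 hv
  exact div_le_div₀ ((hF.2.2.1 u).trans (hM ⟨u, hu', rfl⟩)) (hM ⟨u, hu', rfl⟩) hb0 (hbmin hv')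

lemma one_le_kappa (hF : IsAsymNorm F) : 1 ≤ kappa F := by
  have he : ‖EuclideanSpace.single (0 : Fin 2) (1 : ℝ)‖ = 1 := by simp
  refine le_csSup hF.bddAbove_ratios ⟨_, _, he, he, ?_⟩
  rw [div_self (hF.2.2.2 _ (norm_ne_zero_iff.1 (by rw [he]; exact one_ne_zero))).ne']

lemma map_mul_norm_le (hF : IsAsymNorm F) (x y : E2) :
    F x * ‖y‖ ≤ kappa F * F y * ‖x‖ := by
  rcases eq_or_ne x 0 with rfl | hx
  · simp [hF.map_zero]
  rcases eq_or_ne y 0 with rfl | hy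
  · simp [hF.map_zero]
  have hx' : 0 < ‖x‖ := norm_pos_iff.2 hx
  have hy' : 0 < ‖y‖ := norm_pos_iff.2 hy
  have hratio : F x / ‖x‖ / (F y / ‖y‖) ≤ kappa F := by
    refine le_csSup hF.bddAbove_ratios ⟨‖x‖⁻¹ • x, ‖y‖⁻¹ • y, ?_, ?_, ?_⟩
    · rw [norm_smul, norm_inv, norm_norm, inv_mul_cancel₀ hx'.ne']
    · rw [norm_smul, norm_inv, norm_norm, inv_mul_cancel₀ hy'.ne']
    · rw [hF.map_div_norm, hF.map_div_norm]
  have hFy : 0 < F y / ‖y‖ := div_pos (hF.2.2.2 y hy) hy'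
  rw [div_le_iff₀ hFy] at hratio
  field_simp at hratio
  linarith

lemma exists_inner_eq_and_forall_inner_le (hF : IsAsymNorm F) (u : E2) :
    ∃ p : E2, ⟪p, u⟫ = F u ∧ ∀ x, ⟪p, x⟫ ≤ F x := by
  rcases eq_or_ne u 0 with rfl | hu
  · exact ⟨0, by simp [hF.map_zero], fun x => by simpa using hF.2.2.1 x⟩
  let f : E2 →ₗ.[ℝ] ℝ := LinearPMap.mkSpanSingleton u (F u) hu
  have hf : ∀ x : f.domain, f x ≤ F x := by
    rintro ⟨x, hx⟩
    obtain ⟨c, rfl⟩ := Submodule.mem_span_singleton.1 hx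
    rw [LinearPMap.mkSpanSingleton'_apply _ _ _ c hx, smul_eq_mul]
    rcases le_or_gt 0 c with hc | hc
    · rw [RingHom.id_apply, hF.2.1 c hc]
    · exact (mul_nonpos_of_nonpos_of_nonneg hc.le (hF.2.2.1 u)).trans (hF.2.2.1 _)
  obtain ⟨g, hgf, hgF⟩ :=
    exists_extension_of_le_sublinear f F (fun c hc => hF.2.1 c hc.le) hF.map_add_le hf
  refine ⟨(InnerProductSpace.toDual ℝ E2).symm (LinearMap.toContinuousLinearMap g), ?_, ?_⟩
  · rw [InnerProductSpace.toDual_symm_apply, LinearMap.coe_toContinuousLinearMap',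
      hgf ⟨u, Submodule.mem_span_singleton_self u⟩, LinearPMap.mkSpanSingleton_apply]
  · intro x
    rw [InnerProductSpace.toDual_symm_apply]
    exact hgF x

lemma norm_mul_norm_le_kappa_mul_inner (hF : IsAsymNorm F) {u p : E2}
    (hpu : ⟪p, u⟫ = F u) (hpF : ∀ x, ⟪p, x⟫ ≤ F x) : ‖u‖ * ‖p‖ ≤ kappa F * ⟪u, p⟫ := by
  rcases eq_or_ne p 0 with rfl | hp
  · simp
  have hp' : 0 < ‖p‖ := norm_pos_iff.2 hp
  have hpp : ‖p‖ ^ 2 ≤ F p := by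
    rw [← real_inner_self_eq_norm_sq]
    exact hpF p
  have h : ‖p‖ * (‖u‖ * ‖p‖) ≤ ‖p‖ * (kappa F * F u) := by
    nlinarith [mul_le_mul_of_nonneg_right hpp (norm_nonneg u), hF.map_mul_norm_le p u]
  rw [real_inner_comm, hpu]
  exact le_of_mul_le_mul_left h hp'

lemma le_map_add_smul (hF : IsAsymNorm F) {u v : E2}
    (h : √(kappa F ^ 2 - 1) * |det2 u v| ≤ ⟪u, v⟫) {δ : ℝ} (hδ : 0 ≤ δ) :
    F u ≤ F (u + δ • v) := by
  rcases eq_or_ne u 0 with rfl | hu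
  · simpa [hF.map_zero] using hF.2.2.1 (δ • v)
  obtain ⟨p, hpu, hpF⟩ := hF.exists_inner_eq_and_forall_inner_le u
  have hup : 0 ≤ ⟪u, p⟫ := by
    rw [real_inner_comm, hpu]
    exact hF.2.2.1 u
  have hpv : 0 ≤ ⟪p, v⟫ := inner_nonneg_of_abs_det2_le hu hup
    (abs_det2_le_of_norm_mul_norm_le hF.one_le_kappa
      (hF.norm_mul_norm_le_kappa_mul_inner hpu hpF)) h
  calc F u ≤ F u + δ * ⟪p, v⟫ := le_add_of_nonneg_right (mul_nonneg hδ hpv)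
    _ = ⟪p, u + δ • v⟫ := by rw [inner_add_right, real_inner_smul_right, hpu]
    _ ≤ F (u + δ • v) := hpF _

end IsAsymNorm

theorem stmt7_general (F : E2 → ℝ) (hF : IsAsymNorm F) (u v : E2)
    (hdet : |det2 u v| = 1)
    (hs : Real.sqrt (kappa F ^ 2 - 1) ≤ ⟪u, v⟫) :
    IsAcute F u v := by
  intro δ hδ
  have huv : √(kappa F ^ 2 - 1) * |det2 u v| ≤ ⟪u, v⟫ := by rwa [hdet, mul_one]
  refine ⟨hF.le_map_add_smul huv hδ, hF.le_map_add_smul ?_ hδ⟩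
  rwa [det2_anticomm, abs_neg, real_inner_comm]

/-- if `u, v ∈ ℤ²` satisfy `|det(u,v)| = 1` and `⟨u,v⟩ ≥ √(κ(F)² − 1)`,
then `u` and `v` form an `F`-acute angle. -/
theorem stmt7 (F : E2 → ℝ) (hF : IsAsymNorm F) (u v : E2)
    (hu : IsIntVec u) (hv : IsIntVec v) (hdet : |det2 u v| = 1)
    (hs : Real.sqrt (kappa F ^ 2 - 1) ≤ ⟪u, v⟫) :
    IsAcute F u v :=
  stmt7_general F hF u v hdet hs
end
end

section
/- Let F, F₁, …, F_r be asymmetric norms on ℝ² that are C¹ on ℝ² ∖ {0}, and assume that everywhere on ℝ, min{φ_{F₁}, …, φ_{F_r}} ≤ φ_F ≤ max{φ_{F₁}, …, φ_{F_r}}. Then for any u, v ∈ ℝ² ∖ {0}: if u and v form an F_i-acute angle for every 1 ≤ i ≤ r, then u and v form an F-acute angle. -/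
open scoped RealInnerProductSpace
open MeasureTheory Real

noncomputable section

/-!
Acuteness is invariant under rescaling `u` and `v` by positive factors, so one may take
`u = e_θ`, `v = e_θ'`. For a convex `C¹` function, `F e_θ ≤ F (e_θ + δ e_θ')` for all `δ ≥ 0`
iff the directional derivative `⟪∇F(e_θ), e_θ'⟫` is nonnegative; expanding `e_θ'` in the
frame `e_θ, e_θ^⊥` and using Euler's identity `⟪∇F(e_θ), e_θ⟫ = F e_θ` shows that this
derivative is a positive multiple of `cos (θ' - θ - φ_F θ)`. Since all the angles `φ` lie in
`(-π/2, π/2)`, `φ_F θ` lies between two values `φ_{F_i} θ ≤ φ_{F_j} θ` less than `π` apart,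
and `cos (c - φ_F θ)` is then a nonnegative combination of `cos (c - φ_{F_i} θ)` and
`cos (c - φ_{F_j} θ)`.
-/

section RayMinimum

variable {E : Type*} [NormedAddCommGroup E] [NormedSpace ℝ E] {f : E → ℝ} {u : E}

theorem forall_le_add_smul_iff_fderiv_nonneg (hf : ConvexOn ℝ Set.univ f)
    (hd : DifferentiableAt ℝ f u) (v : E) :
    (∀ δ : ℝ, 0 ≤ δ → f u ≤ f (u + δ • v)) ↔ 0 ≤ fderiv ℝ f u v := by
  have hline : HasDerivAt (fun t : ℝ => f (u + t • v)) (fderiv ℝ f u v) 0 :=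
    hd.hasFDerivAt.hasLineDerivAt v
  constructor
  · intro h
    have hmin : IsMinOn f (segment ℝ u (u + v)) u := by
      rw [segment_eq_image']
      rintro _ ⟨t, ht, rfl⟩
      simpa using h t ht.1
    exact hmin.localize.hasFDerivWithinAt_nonneg hd.hasFDerivAt.hasFDerivWithinAt
      (mem_posTangentConeAt_of_segment_subset subset_rfl)
  · intro h δ hδ
    rcases hδ.eq_or_lt with rfl | hδ
    · simp
    have hconv : ConvexOn ℝ Set.univ (fun t : ℝ => f (u + t • v)) := by
      have := hf.comp_affineMap (AffineMap.lineMap u (u + v))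
      simpa [Function.comp_def, AffineMap.lineMap_apply_module', add_comm] using this
    have hslope := hconv.le_slope_of_hasDerivAt (Set.mem_univ 0) (Set.mem_univ δ) hδ hline
    rw [slope_def_field, zero_smul, add_zero, sub_zero, le_div_iff₀ hδ] at hslope
    linarith [mul_nonneg h hδ.le]

theorem fderiv_apply_self_of_homogeneous (hhom : ∀ c : ℝ, 0 ≤ c → ∀ x, f (c • x) = c * f x)
    (hd : DifferentiableAt ℝ f u) : fderiv ℝ f u u = f u := by
  have hline : HasDerivAt (fun t : ℝ => f (u + t • u)) (fderiv ℝ f u u) 0 :=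
    hd.hasFDerivAt.hasLineDerivAt u
  have hscale : HasDerivAt (fun t : ℝ => f (u + t • u)) (f u) 0 := by
    have : HasDerivAt (fun t : ℝ => (1 + t) * f u) (f u) 0 := by
      simpa using ((hasDerivAt_id (0 : ℝ)).const_add 1).mul_const (f u)
    refine this.congr_of_eventuallyEq ?_
    filter_upwards [eventually_gt_nhds neg_one_lt_zero] with t ht
    rw [← hhom (1 + t) (by linarith), add_smul, one_smul]
  exact hline.unique hscale

theorem forall_le_add_smul_smul_iff (hhom : ∀ c : ℝ, 0 ≤ c → ∀ x, f (c • x) = c * f x)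
    {a b : ℝ} (ha : 0 < a) (hb : 0 < b) (x y : E) :
    (∀ δ : ℝ, 0 ≤ δ → f (a • x) ≤ f (a • x + δ • b • y)) ↔
      ∀ δ : ℝ, 0 ≤ δ → f x ≤ f (x + δ • y) := by
  have hscale : ∀ δ : ℝ, f (a • x + δ • b • y) = a * f (x + (δ * b / a) • y) := by
    intro δ
    rw [← hhom a ha.le, smul_add, smul_smul, smul_smul]
    congr 3
    field_simp
  simp only [hscale, hhom a ha.le, mul_le_mul_iff_right₀ ha]
  constructor
  · intro h δ hδ
    have := h (δ * a / b) (by positivity)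
    rwa [show δ * a / b * b / a = δ by field_simp] at this
  · exact fun h δ hδ => h _ (by positivity)

end RayMinimum

theorem cos_sub_nonneg_of_le_of_le {c φ₁ φ φ₂ : ℝ} (h₁ : φ₁ ≤ φ) (h₂ : φ ≤ φ₂)
    (hπ : φ₂ - φ₁ < π) (hc₁ : 0 ≤ cos (c - φ₁)) (hc₂ : 0 ≤ cos (c - φ₂)) :
    0 ≤ cos (c - φ) := by
  rcases h₁.eq_or_lt with rfl | h₁
  · exact hc₁
  have hcomb : sin (φ₂ - φ₁) * cos (c - φ) =
      sin (φ₂ - φ) * cos (c - φ₁) + sin (φ - φ₁) * cos (c - φ₂) := by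
    simp only [sin_sub, cos_sub]
    ring
  have hs : 0 ≤ sin (φ₂ - φ) := sin_nonneg_of_nonneg_of_le_pi (by linarith) (by linarith)
  have hs' : 0 ≤ sin (φ - φ₁) := sin_nonneg_of_nonneg_of_le_pi (by linarith) (by linarith)
  refine nonneg_of_mul_nonneg_right ?_ (sin_pos_of_pos_of_lt_pi (by linarith) hπ)
  rw [hcomb]
  positivity

theorem mul_cos_add_mul_sin_nonneg_iff {a : ℝ} (ha : 0 < a) (b ψ : ℝ) :
    0 ≤ a * cos ψ + b * sin ψ ↔ 0 ≤ cos (ψ - arctan (b / a)) := by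
  have hsqrt : 0 < √(1 + (b / a) ^ 2) := by positivity
  have hrot : a * cos ψ + b * sin ψ = a * √(1 + (b / a) ^ 2) * cos (ψ - arctan (b / a)) := by
    rw [cos_sub, cos_arctan, sin_arctan]
    field_simp
  rw [hrot, mul_nonneg_iff_of_pos_left (by positivity)]

theorem eTheta_ne_zero (θ : ℝ) : eTheta θ ≠ 0 := by
  intro h
  have h0 : cos θ = 0 := by simpa [eTheta, mk2] using congrArg (fun w : E2 => w 0) h
  have h1 : sin θ = 0 := by simpa [eTheta, mk2] using congrArg (fun w : E2 => w 1) h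
  simpa [h0, h1] using sin_sq_add_cos_sq θ

theorem exists_eq_norm_smul_eTheta (u : E2) : ∃ θ : ℝ, u = ‖u‖ • eTheta θ := by
  set z : ℂ := Complex.orthonormalBasisOneI.repr.symm u
  have hz : ‖z‖ = ‖u‖ := LinearIsometryEquiv.norm_map _ u
  refine ⟨z.arg, ?_⟩
  ext i
  fin_cases i
  · simp [eTheta, mk2, ← hz, Complex.norm_mul_cos_arg, z]
  · simp [eTheta, mk2, ← hz, Complex.norm_mul_sin_arg, z]

theorem inner_eTheta (g : E2) (α β : ℝ) :
    ⟪g, eTheta β⟫ = ⟪g, eTheta α⟫ * cos (β - α) + det2 (eTheta α) g * sin (β - α) := by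
  simp only [eTheta, mk2, det2, PiLp.inner_apply, RCLike.inner_apply, conj_trivial,
    Fin.sum_univ_two, PiLp.toLp_apply, Matrix.cons_val_zero, Matrix.cons_val_one, cos_sub, sin_sub]
  linear_combination (-(g 0 * cos β + g 1 * sin β)) * sin_sq_add_cos_sq α

theorem phiF_sub_phiF_lt_pi (G H : E2 → ℝ) (θ : ℝ) : phiF G θ - phiF H θ < π := by
  unfold phiF
  linarith [arctan_lt_pi_div_two (det2 (eTheta θ) (gradient G (eTheta θ)) / G (eTheta θ)),
    neg_pi_div_two_lt_arctan (det2 (eTheta θ) (gradient H (eTheta θ)) / H (eTheta θ))]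

section AsymNorm

variable {G : E2 → ℝ} (hG : IsAsymNorm G) (hC1 : ContDiffOn ℝ 1 G {(0 : E2)}ᶜ)
include hG hC1

theorem forall_le_add_smul_eTheta_iff (θ θ' : ℝ) :
    (∀ δ : ℝ, 0 ≤ δ → G (eTheta θ) ≤ G (eTheta θ + δ • eTheta θ')) ↔
      0 ≤ cos (θ' - θ - phiF G θ) := by
  have hd : DifferentiableAt ℝ G (eTheta θ) :=
    (hC1.contDiffAt (isOpen_compl_singleton.mem_nhds (eTheta_ne_zero θ))).differentiableAt
      one_ne_zero
  have heuler : ⟪gradient G (eTheta θ), eTheta θ⟫ = G (eTheta θ) := by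
    rw [inner_gradient_left]
    exact fderiv_apply_self_of_homogeneous hG.2.1 hd
  rw [forall_le_add_smul_iff_fderiv_nonneg hG.1 hd, ← inner_gradient_left, inner_eTheta _ θ,
    heuler]
  exact mul_cos_add_mul_sin_nonneg_iff (hG.2.2.2 _ (eTheta_ne_zero θ)) _ _

theorem isAcute_smul_eTheta_iff {a b : ℝ} (ha : 0 < a) (hb : 0 < b) (θ θ' : ℝ) :
    IsAcute G (a • eTheta θ) (b • eTheta θ') ↔
      0 ≤ cos (θ' - θ - phiF G θ) ∧ 0 ≤ cos (θ - θ' - phiF G θ') := by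
  simp only [IsAcute, imp_and, forall_and, forall_le_add_smul_smul_iff hG.2.1 ha hb,
    forall_le_add_smul_smul_iff hG.2.1 hb ha, forall_le_add_smul_eTheta_iff hG hC1]

end AsymNorm

theorem stmt15_general (r : ℕ) (F : E2 → ℝ) (Fs : Fin r → E2 → ℝ)
    (hF : IsAsymNorm F) (hFC1 : ContDiffOn ℝ 1 F {(0 : E2)}ᶜ)
    (hFs : ∀ i, IsAsymNorm (Fs i)) (hFsC1 : ∀ i, ContDiffOn ℝ 1 (Fs i) {(0 : E2)}ᶜ)
    (hphi : ∀ θ : ℝ, (∃ i, phiF (Fs i) θ ≤ phiF F θ) ∧ (∃ i, phiF F θ ≤ phiF (Fs i) θ)) :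
    ∀ u v : E2, u ≠ 0 → v ≠ 0 → (∀ i, IsAcute (Fs i) u v) → IsAcute F u v := by
  intro u v hu hv hacute
  obtain ⟨θ, hθ⟩ := exists_eq_norm_smul_eTheta u
  obtain ⟨θ', hθ'⟩ := exists_eq_norm_smul_eTheta v
  have hu' : 0 < ‖u‖ := norm_pos_iff.mpr hu
  have hv' : 0 < ‖v‖ := norm_pos_iff.mpr hv
  rw [hθ, hθ'] at hacute ⊢
  have hcos i := (isAcute_smul_eTheta_iff (hFs i) (hFsC1 i) hu' hv' θ θ').mp (hacute i)
  have hbetween (c ψ : ℝ) (h : ∀ i, 0 ≤ cos (c - phiF (Fs i) ψ)) : 0 ≤ cos (c - phiF F ψ) := by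
    obtain ⟨⟨i, hi⟩, ⟨j, hj⟩⟩ := hphi ψ
    exact cos_sub_nonneg_of_le_of_le hi hj (phiF_sub_phiF_lt_pi _ _ ψ) (h i) (h j)
  rw [isAcute_smul_eTheta_iff hF hFC1 hu' hv']
  exact ⟨hbetween _ θ fun i => (hcos i).1, hbetween _ θ' fun i => (hcos i).2⟩

/-- if `min_i φ_{F_i} ≤ φ_F ≤ max_i φ_{F_i}` everywhere on `ℝ`, then any
pair `u, v` forming an `F_i`-acute angle for every `i` also forms an `F`-acute angle. -/
theorem stmt15 (r : ℕ) (hr : 0 < r) (F : E2 → ℝ) (Fs : Fin r → E2 → ℝ)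
    (hF : IsAsymNorm F) (hFC1 : ContDiffOn ℝ 1 F {(0 : E2)}ᶜ)
    (hFs : ∀ i, IsAsymNorm (Fs i)) (hFsC1 : ∀ i, ContDiffOn ℝ 1 (Fs i) {(0 : E2)}ᶜ)
    (hphi : ∀ θ : ℝ, (∃ i, phiF (Fs i) θ ≤ phiF F θ) ∧ (∃ i, phiF F θ ≤ phiF (Fs i) θ)) :
    ∀ u v : E2, u ≠ 0 → v ≠ 0 → (∀ i, IsAcute (Fs i) u v) → IsAcute F u v :=
  stmt15_general r F Fs hF hFC1 hFs hFsC1 hphi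
end
end
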